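/- The number of 4-element sets of even 2-characteristics lying in C₄⁻ is 15, the number lying in C₄⁺ is 15, and the number of the remaining 4-element sets (those in neither C₄⁻ nor C₄⁺) is 180. -/
import Mathlib


open scoped Classical

/-- A 2-characteristic: a pair `m = (m', m'')` with `m', m'' ∈ (ZMod 2)²`. -/
abbrev Char2 : Type := (ZMod 2 × ZMod 2) × (ZMod 2 × ZMod 2)

/-- `m` is even if `m'₁·m''₁ + m'₂·m''₂ = 0` in `ZMod 2`. -/
def IsEvenChar (m : Char2) : Prop := m.1.1 * m.2.1 + m.1.2 * m.2.2 = 0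

/-- `m` is odd if it is not even. -/
def IsOddChar (m : Char2) : Prop := ¬ IsEvenChar m

/-- The finset of all (10) even 2-characteristics. -/
noncomputable def EvenChars : Finset Char2 := Finset.univ.filter IsEvenChar

/-- `C₃⁻`: 3-element sets of even characteristics whose sum is odd. -/
def C3minus (M : Finset Char2) : Prop :=
  M ⊆ EvenChars ∧ M.card = 3 ∧ IsOddChar (∑ m ∈ M, m)

/-- `C₃⁺`: 3-element sets of even characteristics whose sum is even. -/
def C3plus (M : Finset Char2) : Prop :=
  M ⊆ EvenChars ∧ M.card = 3 ∧ IsEvenChar (∑ m ∈ M, m)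

/-- `C₄⁻`: 4-element sets of even characteristics all of whose 3-element subsets lie in `C₃⁻`. -/
def C4minus (M : Finset Char2) : Prop :=
  M ⊆ EvenChars ∧ M.card = 4 ∧ ∀ T ⊆ M, T.card = 3 → C3minus T

/-- `C₄⁺`: 4-element sets of even characteristics all of whose 3-element subsets lie in `C₃⁺`. -/
def C4plus (M : Finset Char2) : Prop :=
  M ⊆ EvenChars ∧ M.card = 4 ∧ ∀ T ⊆ M, T.card = 3 → C3plus T

/-- `C₅⁻`: 5-element sets of even characteristics containing exactly one element of `C₄⁻`. -/
def C5minus (M : Finset Char2) : Prop :=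
  M ⊆ EvenChars ∧ M.card = 5 ∧ ∃! T, T ⊆ M ∧ C4minus T

/-- `C₅⁺`: 5-element sets of even characteristics containing exactly one element of `C₄⁺`. -/
def C5plus (M : Finset Char2) : Prop :=
  M ⊆ EvenChars ∧ M.card = 5 ∧ ∃! T, T ⊆ M ∧ C4plus T

/-- `C₆⁻`: 6-element sets of even characteristics whose complement lies in `C₄⁺`. -/
def C6minus (M : Finset Char2) : Prop :=
  M ⊆ EvenChars ∧ M.card = 6 ∧ C4plus (EvenChars \ M)

/-- `C₆⁺`: 6-element sets of even characteristics whose complement lies in `C₄⁻`. -/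
def C6plus (M : Finset Char2) : Prop :=
  M ⊆ EvenChars ∧ M.card = 6 ∧ C4minus (EvenChars \ M)


instance decIsEvenChar : DecidablePred IsEvenChar := fun m => by unfold IsEvenChar; infer_instance

/-- Computable copy of `EvenChars`. -/
def EC : Finset Char2 := @Finset.filter _ IsEvenChar decIsEvenChar Finset.univ

instance decIsOddChar : DecidablePred IsOddChar := fun m => by unfold IsOddChar; infer_instance

lemma EC_eq : EvenChars = EC := by
  unfold EvenChars EC
  exact Finset.filter_congr_decidable _ _ _

def P4m (M : Finset Char2) : Prop :=
  M ⊆ EC ∧ M.card = 4 ∧ ((M.powersetCard 3).filter (fun T => IsOddChar (∑ m ∈ T, m))).card = 4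

def P4p (M : Finset Char2) : Prop :=
  M ⊆ EC ∧ M.card = 4 ∧ ((M.powersetCard 3).filter (fun T => IsEvenChar (∑ m ∈ T, m))).card = 4

instance decP4m : DecidablePred P4m := fun M => by unfold P4m; infer_instance
instance decP4p : DecidablePred P4p := fun M => by unfold P4p; infer_instance

lemma forall_iff_filter (M : Finset Char2) (h4 : M.card = 4) (p : Finset Char2 → Prop)
    [DecidablePred p] :
    (∀ T ∈ M.powersetCard 3, p T) ↔ ((M.powersetCard 3).filter p).card = 4 := by
  have hc : (M.powersetCard 3).card = 4 := by
    rw [Finset.card_powersetCard, h4]; rfl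
  constructor
  · intro h
    rw [Finset.filter_true_of_mem h, hc]
  · intro h T hT
    exact Finset.filter_card_eq (h.trans hc.symm) T hT

lemma C4minus_iff (M : Finset Char2) : C4minus M ↔ P4m M := by
  unfold C4minus P4m C3minus
  rw [← EC_eq]
  refine and_congr_right fun hM => and_congr_right fun h4 => ?_
  rw [← forall_iff_filter M h4]
  constructor
  · intro h T hT
    rw [Finset.mem_powersetCard] at hT
    exact (h T hT.1 hT.2).2.2
  · intro h T hT hc
    exact ⟨hT.trans hM, hc, h T (Finset.mem_powersetCard.mpr ⟨hT, hc⟩)⟩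

lemma C4plus_iff (M : Finset Char2) : C4plus M ↔ P4p M := by
  unfold C4plus P4p C3plus
  rw [← EC_eq]
  refine and_congr_right fun hM => and_congr_right fun h4 => ?_
  rw [← forall_iff_filter M h4]
  constructor
  · intro h T hT
    rw [Finset.mem_powersetCard] at hT
    exact (h T hT.1 hT.2).2.2
  · intro h T hT hc
    exact ⟨hT.trans hM, hc, h T (Finset.mem_powersetCard.mpr ⟨hT, hc⟩)⟩

lemma set_eq_filter (p : Finset Char2 → Prop) [DecidablePred p]
    (hp : ∀ M, p M → M ⊆ EC ∧ M.card = 4) :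
    {M : Finset Char2 | p M} = ↑((EC.powersetCard 4).filter p) := by
  ext M
  simp only [Set.mem_setOf_eq, Finset.coe_filter, Finset.mem_powersetCard]
  exact ⟨fun h => ⟨hp M h, h⟩, fun h => h.2⟩

set_option maxRecDepth 40000 in
theorem card_C4_orbits :
    {M : Finset Char2 | C4minus M}.ncard = 15 ∧
    {M : Finset Char2 | C4plus M}.ncard = 15 ∧
    {M : Finset Char2 | M ⊆ EvenChars ∧ M.card = 4 ∧ ¬ C4minus M ∧ ¬ C4plus M}.ncard = 180 := by
  have h1 : {M : Finset Char2 | C4minus M} = {M : Finset Char2 | P4m M} := by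
    ext M; exact C4minus_iff M
  have h2 : {M : Finset Char2 | C4plus M} = {M : Finset Char2 | P4p M} := by
    ext M; exact C4plus_iff M
  have h3 : {M : Finset Char2 | M ⊆ EvenChars ∧ M.card = 4 ∧ ¬ C4minus M ∧ ¬ C4plus M}
      = {M : Finset Char2 | M ⊆ EC ∧ M.card = 4 ∧ ¬ P4m M ∧ ¬ P4p M} := by
    ext M
    simp only [Set.mem_setOf_eq, C4minus_iff, C4plus_iff, EC_eq]
  refine ⟨?_, ?_, ?_⟩
  · rw [h1, set_eq_filter P4m (fun M h => ⟨h.1, h.2.1⟩), Set.ncard_coe_finset]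
    decide
  · rw [h2, set_eq_filter P4p (fun M h => ⟨h.1, h.2.1⟩), Set.ncard_coe_finset]
    decide
  · rw [h3, set_eq_filter (fun M => M ⊆ EC ∧ M.card = 4 ∧ ¬ P4m M ∧ ¬ P4p M)
      (fun M h => ⟨h.1, h.2.1⟩), Set.ncard_coe_finset]
    decide
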